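/- Let G and K be convex bodies in ℝ^d with 0 ∈ int(G) and G ⊆ int(K). Then the Funk Holmes–Thompson volumes satisfy the polarity identity ∫_G λ_d((K − x)°) dλ_d(x) = ∫_{K°} λ_d((G° − y)°) dλ_d(y), where λ_d is Lebesgue measure on ℝ^d. (Equivalently, vol_F^K(G) = vol_F^{G°}(K°), where vol_F^K(G) := (1/ω_d)·∫_G λ_d((K − x)°) dλ_d(x) is the Funk Holmes–Thompson volume of G in the Funk geometry of K.) -/

import Mathlib

open Set MeasureTheory Metric
open scoped Pointwise RealInnerProductSpace ENNReal

noncomputable section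

abbrev Euc (d : ℕ) := EuclideanSpace ℝ (Fin d)

/-- A convex body: a compact convex set with nonempty interior. -/
def IsConvexBody {d : ℕ} (K : Set (Euc d)) : Prop :=
  IsCompact K ∧ Convex ℝ K ∧ (interior K).Nonempty

/-- The polar of a set. -/
def polarSet {d : ℕ} (S : Set (Euc d)) : Set (Euc d) :=
  {y | ∀ x ∈ S, ⟪x, y⟫ ≤ 1}

/-- The Hilbert distance with respect to the body `K`. -/
def hilbertDist {d : ℕ} (K : Set (Euc d)) (x y : Euc d) : ℝ :=
  -(1 / 2) * Real.log ((1 - gauge ((fun k => k - x) '' K) (y - x)) *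
    (1 - gauge ((fun k => k - y) '' K) (x - y)))

/-- The Hilbert ball of radius `r` centered at `x`. -/
def hilbertBall {d : ℕ} (K : Set (Euc d)) (x : Euc d) (r : ℝ) : Set (Euc d) :=
  {y ∈ interior K | hilbertDist K x y ≤ r}

/-- The Hilbert covering number of `U` at scale `α` in the geometry induced by `K`. -/
def hilbertCov {d : ℕ} (K U : Set (Euc d)) (α : ℝ) : ℕ :=
  sInf {m : ℕ | ∃ x : Fin m → Euc d, (∀ i, x i ∈ interior K) ∧
    U ⊆ ⋃ i, hilbertBall K (x i) α}

/-- The translative covering number of `U` by translates of `α • D`. -/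
def transCov {d : ℕ} (D U : Set (Euc d)) (α : ℝ) : ℕ :=
  sInf {m : ℕ | ∃ x : Fin m → Euc d, U ⊆ ⋃ i, x i +ᵥ α • D}

/-- The Hilbert `α`-expansion of `G` in `K`. -/
def hilbertExpand {d : ℕ} (K G : Set (Euc d)) (α : ℝ) : Set (Euc d) :=
  {x ∈ interior K | sInf (hilbertDist K x '' G) ≤ α}

/-- The Lebesgue volume of the Euclidean unit ball in `ℝ^d`. -/
def ωd (d : ℕ) : ℝ := (volume (ball (0 : Euc d) 1)).toReal

/-- The Hilbert Finsler unit ball at `y` in the geometry induced by `K`. -/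
def finslerBall {d : ℕ} (K : Set (Euc d)) (y : Euc d) : Set (Euc d) :=
  {v | gauge ((fun k => k - y) '' K) v + gauge ((fun k => k - y) '' K) (-v) ≤ 2}

/-- The Hilbert Holmes–Thompson volume of `U` in the geometry induced by `K`. -/
def volH {d : ℕ} (K U : Set (Euc d)) : ℝ :=
  (1 / ωd d) * ∫ y in U, (volume (polarSet (finslerBall K y))).toReal

/-- The recentered Macbeath region `A(x) := (K ∩ (2x − K)) − x`. -/
def macbeathA {d : ℕ} (K : Set (Euc d)) (x : Euc d) : Set (Euc d) :=
  (fun k => k - x) '' (K ∩ ((fun k => (2 : ℝ) • x - k) '' K))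

/-!
For `x` with `⟪x, y⟫ < 1` on `S°`, the projective map `y ↦ (1 - ⟪x, y⟫)⁻¹ • y` carries `S°` onto
`(S - x)°`, and its Jacobian determinant is `(1 - ⟪x, y⟫)^{-(d+1)}`. Hence
`λ((S - x)°) = ∫_{S°} (1 - ⟪x, y⟫)^{-(d+1)} dy`. Applying this to `S = K` on the left and to
`S = G°` (whose polar is `G` by the bipolar theorem) on the right, both sides of the identity become
the integral of the symmetric kernel `(1 - ⟪x, y⟫)^{-(d+1)}` over `G × K°`, so they agree by Fubini.
-/

theorem LinearMap.det_id_add_smulRight {R M : Type*} [CommRing R] [AddCommGroup M] [Module R M]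
    [Module.Free R M] [Module.Finite R M] (f : M →ₗ[R] R) (v : M) :
    LinearMap.det (LinearMap.id + f.smulRight v) = 1 + f v := by
  let b := Module.Free.chooseBasis R M
  rw [← LinearMap.det_toMatrix b, map_add, LinearMap.toMatrix_id, LinearMap.toMatrix_smulRight,
    Matrix.vecMulVec_eq (Fin 1), Matrix.det_one_add_replicateCol_mul_replicateRow]
  have hf := congrArg f (b.sum_repr v)
  simp only [map_sum, map_smul, smul_eq_mul] at hf
  simpa [dotProduct, mul_comm] using hf

section ProjectiveMap

variable {E : Type*} [NormedAddCommGroup E] [InnerProductSpace ℝ E]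

theorem hasFDerivAt_inv_one_sub_inner_smul {x y : E} (h : ⟪x, y⟫ ≠ 1) :
    HasFDerivAt (fun z => (1 - ⟪x, z⟫)⁻¹ • z)
      ((1 - ⟪x, y⟫)⁻¹ • (ContinuousLinearMap.id ℝ E +
        ((1 - ⟪x, y⟫)⁻¹ • innerSL ℝ x).smulRight y)) y := by
  have ht : 1 - ⟪x, y⟫ ≠ 0 := sub_ne_zero.2 h.symm
  have hinv : HasFDerivAt (fun z => (1 - ⟪x, z⟫)⁻¹) (((1 - ⟪x, y⟫) ^ 2)⁻¹ • innerSL ℝ x) y := by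
    refine ((hasFDerivAt_inv ht).comp y ((innerSL ℝ x).hasFDerivAt.const_sub 1)).congr_fderiv ?_
    ext v
    simp only [ContinuousLinearMap.comp_neg, neg_apply, ContinuousLinearMap.comp_apply,
      coe_innerSL_apply, ContinuousLinearMap.toSpanSingleton_apply, smul_eq_mul, mul_neg, neg_neg,
      smul_apply]
    ring
  refine (hinv.smul (hasFDerivAt_id y)).congr_fderiv ?_
  ext v
  simp only [add_apply, smul_apply, ContinuousLinearMap.id_apply,
    ContinuousLinearMap.smulRight_apply, coe_innerSL_apply, smul_eq_mul, smul_add, smul_smul, sq,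
    mul_inv_rev]
  congr 2
  ring

theorem det_fderiv_inv_one_sub_inner_smul [FiniteDimensional ℝ E] {x y : E} (h : ⟪x, y⟫ ≠ 1) :
    ((1 - ⟪x, y⟫)⁻¹ • (ContinuousLinearMap.id ℝ E +
        ((1 - ⟪x, y⟫)⁻¹ • innerSL ℝ x).smulRight y)).det =
      (1 - ⟪x, y⟫)⁻¹ ^ (Module.finrank ℝ E + 1) := by
  have ht : 1 - ⟪x, y⟫ ≠ 0 := sub_ne_zero.2 h.symm
  rw [ContinuousLinearMap.det, ContinuousLinearMap.toLinearMap_smul, LinearMap.det_smul,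
    ContinuousLinearMap.toLinearMap_add, ContinuousLinearMap.coe_id,
    ContinuousLinearMap.coe_smulRight, LinearMap.det_id_add_smulRight]
  have hxy : 1 + (1 - ⟪x, y⟫)⁻¹ * ⟪x, y⟫ = (1 - ⟪x, y⟫)⁻¹ := by field_simp; ring
  simp only [ContinuousLinearMap.coe_coe, smul_apply, innerSL_apply_apply, smul_eq_mul, hxy,
    pow_succ]

theorem inv_one_add_inner_smul_inv_one_sub_inner_smul {x y : E} (h : ⟪x, y⟫ ≠ 1) :
    (1 + ⟪x, (1 - ⟪x, y⟫)⁻¹ • y⟫)⁻¹ • (1 - ⟪x, y⟫)⁻¹ • y = y := by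
  have ht : 1 - ⟪x, y⟫ ≠ 0 := sub_ne_zero.2 h.symm
  have : 1 + ⟪x, (1 - ⟪x, y⟫)⁻¹ • y⟫ = (1 - ⟪x, y⟫)⁻¹ := by
    rw [real_inner_smul_right]; field_simp; ring
  rw [this, inv_inv, smul_smul, mul_inv_cancel₀ ht, one_smul]

theorem inv_one_sub_inner_smul_inv_one_add_inner_smul {x z : E} (h : ⟪x, z⟫ ≠ -1) :
    (1 - ⟪x, (1 + ⟪x, z⟫)⁻¹ • z⟫)⁻¹ • (1 + ⟪x, z⟫)⁻¹ • z = z := by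
  have hu : 1 + ⟪x, z⟫ ≠ 0 := fun h' => h (by linarith)
  have : 1 - ⟪x, (1 + ⟪x, z⟫)⁻¹ • z⟫ = (1 + ⟪x, z⟫)⁻¹ := by
    rw [real_inner_smul_right]; field_simp; ring
  rw [this, inv_inv, smul_smul, mul_inv_cancel₀ hu, one_smul]

theorem injOn_inv_one_sub_inner_smul (x : E) :
    InjOn (fun y => (1 - ⟪x, y⟫)⁻¹ • y) {y | ⟪x, y⟫ ≠ 1} :=
  LeftInvOn.injOn (f₁' := fun z => (1 + ⟪x, z⟫)⁻¹ • z) fun _ hy =>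
    inv_one_add_inner_smul_inv_one_sub_inner_smul hy

end ProjectiveMap

section PolarSet

variable {d : ℕ}

theorem isClosed_polarSet (S : Set (Euc d)) : IsClosed (polarSet S) := by
  simp only [polarSet, ofPred_forall]
  exact isClosed_biInter fun x _ =>
    isClosed_le (continuous_const.inner continuous_id) continuous_const

theorem inner_add_mul_norm_le_one_of_mem_polarSet {S : Set (Euc d)} {x y : Euc d} {r : ℝ}
    (hr : 0 ≤ r) (hS : closedBall x r ⊆ S) (hy : y ∈ polarSet S) : ⟪x, y⟫ + r * ‖y‖ ≤ 1 := by
  rcases eq_or_ne y 0 with rfl | hy0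
  · simp
  have hny : 0 < ‖y‖ := norm_pos_iff.2 hy0
  have hmem : x + (r / ‖y‖) • y ∈ S := hS <| by
    rw [mem_closedBall, dist_self_add_left, norm_smul, Real.norm_of_nonneg (by positivity),
      div_mul_cancel₀ _ hny.ne']
  have := hy _ hmem
  rwa [inner_add_left, real_inner_smul_left, real_inner_self_eq_norm_sq, sq, ← mul_assoc,
    div_mul_cancel₀ _ hny.ne'] at this

theorem inner_lt_one_of_mem_interior_of_mem_polarSet {S : Set (Euc d)} {x y : Euc d}
    (hx : x ∈ interior S) (hy : y ∈ polarSet S) : ⟪x, y⟫ < 1 := by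
  obtain ⟨r, hr, hS⟩ := nhds_basis_closedBall.mem_iff.1 (mem_interior_iff_mem_nhds.1 hx)
  have := inner_add_mul_norm_le_one_of_mem_polarSet hr.le hS hy
  rcases eq_or_ne y 0 with rfl | hy0
  · simp
  · nlinarith [norm_pos_iff.2 hy0]

theorem isCompact_polarSet {S : Set (Euc d)} (h0 : (0 : Euc d) ∈ interior S) :
    IsCompact (polarSet S) := by
  obtain ⟨r, hr, hS⟩ := nhds_basis_closedBall.mem_iff.1 (mem_interior_iff_mem_nhds.1 h0)
  refine isCompact_of_isClosed_isBounded (isClosed_polarSet S)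
    ((isBounded_closedBall (x := 0) (r := r⁻¹)).subset fun y hy => ?_)
  have := inner_add_mul_norm_le_one_of_mem_polarSet hr.le hS hy
  rw [inner_zero_left, zero_add] at this
  rw [mem_closedBall_zero_iff, ← one_div, le_div_iff₀ hr]
  linarith

theorem zero_mem_interior_polarSet {S : Set (Euc d)} (hS : Bornology.IsBounded S) :
    (0 : Euc d) ∈ interior (polarSet S) := by
  obtain ⟨R, hR, hSR⟩ := hS.subset_closedBall_lt 0 0
  refine mem_interior.2 ⟨ball 0 R⁻¹, fun z hz s hs => ?_, isOpen_ball, mem_ball_self (by positivity)⟩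
  calc ⟪s, z⟫ ≤ ‖s‖ * ‖z‖ := real_inner_le_norm s z
    _ ≤ R * R⁻¹ := mul_le_mul (mem_closedBall_zero_iff.1 (hSR hs)) (mem_ball_zero_iff.1 hz).le
        (norm_nonneg _) hR.le
    _ = 1 := mul_inv_cancel₀ hR.ne'

theorem polarSet_polarSet {S : Set (Euc d)} (hc : IsClosed S) (hconv : Convex ℝ S)
    (h0 : (0 : Euc d) ∈ S) : polarSet (polarSet S) = S := by
  refine Subset.antisymm (fun z hz => ?_) fun s hs y hy => real_inner_comm s y ▸ hy s hs
  by_contra hzS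
  obtain ⟨f, u, hfu, huz⟩ := geometric_hahn_banach_closed_point hconv hc hzS
  have hu : 0 < u := by simpa using hfu 0 h0
  set w := (InnerProductSpace.toDual ℝ (Euc d)).symm f
  have hw : u⁻¹ • w ∈ polarSet S := fun s hs => by
    rw [real_inner_comm, real_inner_smul_left, InnerProductSpace.toDual_symm_apply,
      inv_mul_le_one₀ hu]
    exact (hfu s hs).le
  have := hz _ hw
  rw [real_inner_smul_left, InnerProductSpace.toDual_symm_apply, inv_mul_le_one₀ hu] at this
  linarith

theorem one_add_inner_pos_of_mem_polarSet_image_sub {S : Set (Euc d)} {x z : Euc d}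
    (h0 : (0 : Euc d) ∈ interior S) (hz : z ∈ polarSet ((fun k => k - x) '' S)) :
    0 < 1 + ⟪x, z⟫ := by
  have hx : -x ∈ interior ((fun k => k - x) '' S) :=
    (isOpenMap_sub_right x).image_interior_subset S ⟨0, h0, zero_sub x⟩
  have := inner_lt_one_of_mem_interior_of_mem_polarSet hx hz
  rw [inner_neg_left] at this
  linarith

theorem image_inv_one_sub_inner_smul_polarSet {S : Set (Euc d)} {x : Euc d}
    (h0 : (0 : Euc d) ∈ interior S) (hx : ∀ y ∈ polarSet S, ⟪x, y⟫ < 1) :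
    (fun y => (1 - ⟪x, y⟫)⁻¹ • y) '' polarSet S = polarSet ((fun k => k - x) '' S) := by
  refine Subset.antisymm ?_ fun z hz => ?_
  · rintro _ ⟨y, hy, rfl⟩ _ ⟨s, hs, rfl⟩
    rw [real_inner_smul_right, inner_sub_left, inv_mul_le_one₀ (sub_pos.2 (hx y hy))]
    linarith [hy s hs]
  · have hu := one_add_inner_pos_of_mem_polarSet_image_sub h0 hz
    refine ⟨(1 + ⟪x, z⟫)⁻¹ • z, fun s hs => ?_,
      inv_one_sub_inner_smul_inv_one_add_inner_smul (by linarith)⟩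
    have := hz _ (mem_image_of_mem _ hs)
    rw [inner_sub_left] at this
    rw [real_inner_smul_right, inv_mul_le_one₀ hu]
    linarith

theorem volume_polarSet_image_sub {S : Set (Euc d)} {x : Euc d}
    (h0 : (0 : Euc d) ∈ interior S) (hx : ∀ y ∈ polarSet S, ⟪x, y⟫ < 1) :
    (volume (polarSet ((fun k => k - x) '' S))).toReal =
      ∫ y in polarSet S, (1 - ⟪x, y⟫)⁻¹ ^ (d + 1) := by
  have hne : ∀ y ∈ polarSet S, ⟪x, y⟫ ≠ 1 := fun y hy => (hx y hy).ne
  have hms := (isClosed_polarSet S).measurableSet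
  have hcv := integral_image_eq_integral_abs_det_fderiv_smul volume hms
    (fun y hy => (hasFDerivAt_inv_one_sub_inner_smul (hne y hy)).hasFDerivWithinAt)
    ((injOn_inv_one_sub_inner_smul x).mono hne) fun _ => (1 : ℝ)
  rw [image_inv_one_sub_inner_smul_polarSet h0 hx, setIntegral_const, smul_eq_mul,
    mul_one] at hcv
  rw [← measureReal_def, hcv]
  refine setIntegral_congr_fun hms fun y hy => ?_
  rw [det_fderiv_inv_one_sub_inner_smul (hne y hy), finrank_euclideanSpace_fin, smul_eq_mul,
    mul_one, abs_of_pos (pow_pos (inv_pos.2 (sub_pos.2 (hx y hy))) _)]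

theorem integrable_inv_one_sub_inner_pow {A B : Set (Euc d)} (hA : IsCompact A)
    (hB : IsCompact B) (h : ∀ x ∈ A, ∀ y ∈ B, ⟪x, y⟫ < 1) (n : ℕ) :
    Integrable (Function.uncurry fun x y : Euc d => (1 - ⟪x, y⟫)⁻¹ ^ n)
      ((volume.restrict A).prod (volume.restrict B)) := by
  rw [Measure.prod_restrict]
  refine ContinuousOn.integrableOn_compact (hA.prod hB) (ContinuousOn.pow ?_ n)
  refine (continuous_const.sub (continuous_fst.inner continuous_snd)).continuousOn.inv₀ ?_
  rintro ⟨x, y⟩ ⟨hx, hy⟩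
  exact (sub_pos.2 (h x hx y hy)).ne'

end PolarSet

theorem funk_volume_polarity_general {d : ℕ} (G K : Set (Euc d))
    (hG : IsConvexBody G)
    (h0 : (0 : Euc d) ∈ interior G) (hGK : G ⊆ interior K) :
    ∫ x in G, (volume (polarSet ((fun k => k - x) '' K))).toReal =
      ∫ y in polarSet K,
        (volume (polarSet ((fun k => k - y) '' polarSet G))).toReal := by
  obtain ⟨hGc, hGconv, -⟩ := hG
  have h0K : (0 : Euc d) ∈ interior K := hGK (interior_subset h0)
  have hlt : ∀ x ∈ G, ∀ y ∈ polarSet K, ⟪x, y⟫ < 1 := fun x hx y hy =>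
    inner_lt_one_of_mem_interior_of_mem_polarSet (hGK hx) hy
  have hGG : polarSet (polarSet G) = G :=
    polarSet_polarSet hGc.isClosed hGconv (interior_subset h0)
  calc _ = ∫ x in G, ∫ y in polarSet K, (1 - ⟪x, y⟫)⁻¹ ^ (d + 1) :=
        setIntegral_congr_fun hGc.measurableSet fun x hx =>
          volume_polarSet_image_sub h0K (hlt x hx)
    _ = ∫ y in polarSet K, ∫ x in G, (1 - ⟪x, y⟫)⁻¹ ^ (d + 1) :=
        integral_integral_swap
          (integrable_inv_one_sub_inner_pow hGc (isCompact_polarSet h0K) hlt _)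
    _ = _ := by
        refine setIntegral_congr_fun (isClosed_polarSet K).measurableSet fun y hy => ?_
        have hy' : ∀ x ∈ polarSet (polarSet G), ⟪y, x⟫ < 1 := by
          rw [hGG]
          exact fun x hx => real_inner_comm x y ▸ hlt x hx y hy
        rw [volume_polarSet_image_sub (zero_mem_interior_polarSet hGc.isBounded) hy', hGG]
        simp_rw [real_inner_comm _ y]

/-- Polarity identity for Funk Holmes–Thompson volumes. -/
theorem funk_volume_polarity {d : ℕ} (G K : Set (Euc d))
    (hG : IsConvexBody G) (hK : IsConvexBody K)
    (h0 : (0 : Euc d) ∈ interior G) (hGK : G ⊆ interior K) :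
    ∫ x in G, (volume (polarSet ((fun k => k - x) '' K))).toReal =
      ∫ y in polarSet K,
        (volume (polarSet ((fun k => k - y) '' polarSet G))).toReal :=
  funk_volume_polarity_general G K hG h0 hGK
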